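/- Let e, ẽ be orthogonal vectors with e² = 1, ẽ² = -1 in Cl(p+1,q+1), let P± = (1 ± ẽe)/2, and let a₀⁺, a₁⁺, a₀⁻, a₁⁻, b₀⁺, b₁⁺, b₀⁻, b₁⁻ lie in the subalgebra Cl(p,q) generated by vectors orthogonal to e and ẽ. Write a = P₊a₀⁺ + P₊e a₁⁺ + P₋a₀⁻ + P₋e a₁⁻ and b similarly. Then ab = P₊c₀⁺ + P₊e c₁⁺ + P₋c₀⁻ + P₋e c₁⁻ where c₀⁺ = a₀⁺b₀⁺ + α(a₁⁺)b₁⁻, c₀⁻ = a₀⁻b₀⁻ + α(a₁⁻)b₁⁺, c₁⁺ = a₁⁺b₀⁻ + α(a₀⁺)b₁⁺, c₁⁻ = a₁⁻b₀⁺ + α(a₀⁻)b₁⁻, with α the grade involution. -/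
import Mathlib

open CliffordAlgebra

section aux
variable {A : Type*} [Ring A]

lemma auxA (P P' R s t : A) (h1 : P * P' = R) (h2 : s * P' = P' * s) :
    P * s * (P' * t) = R * (s * t) := by
  rw [mul_assoc P s, ← mul_assoc s, h2, ← mul_assoc, ← mul_assoc, h1, mul_assoc]

lemma auxB (P P' R E s s' t : A) (h1 : P * P' = R) (h2 : s * P' = P' * s)
    (h3 : s * E = E * s') : P * s * (P' * E * t) = R * E * (s' * t) := by
  simp only [← mul_assoc]
  rw [mul_assoc P s, h2, ← mul_assoc, h1, mul_assoc R s, h3, ← mul_assoc]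

lemma auxC (P P' P'' R E s t : A) (h1 : P * P'' = R) (h2 : E * P' = P'' * E)
    (h5 : s * P' = P' * s) : P * E * s * (P' * t) = R * E * (s * t) := by
  simp only [← mul_assoc]
  rw [mul_assoc (P * E) s, h5, ← mul_assoc, mul_assoc P E, h2, ← mul_assoc, h1,
    mul_assoc]

lemma auxD (P P' P'' R E s s' t : A) (h1 : P * P'' = R) (h2 : E * P' = P'' * E)
    (h3 : s * E = E * s') (h4 : E * E = 1) (h5 : s * P' = P' * s) :
    P * E * s * (P' * E * t) = R * (s' * t) := by
  simp only [← mul_assoc]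
  rw [mul_assoc (P * E) s, h5, ← mul_assoc, mul_assoc P E, h2, ← mul_assoc, h1,
    mul_assoc (R * E) s, h3, ← mul_assoc, mul_assoc R E, h4, mul_one, mul_assoc]

end aux

/-- Multiplication rule for the right-ideal decomposition.
Here `f` plays the role of `ẽ`, `E = ι e`, `T = ι f`, `Pp = (1 + fe)/2`,
`Pm = (1 - fe)/2`, and all coefficients lie in the subalgebra generated by the
vectors orthogonal to both `e` and `f`. -/
theorem stmt6 {K V : Type*} [Field K] [AddCommGroup V] [Module K V]
    (hK : (2 : K) ≠ 0) (Q : QuadraticForm K V) (e f : V)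
    (he : Q e = 1) (hf : Q f = -1) (horth : QuadraticMap.polar Q e f = 0)
    (S : Subalgebra K (CliffordAlgebra Q))
    (hS : S = Algebra.adjoin K (ι Q ''
      {v : V | QuadraticMap.polar Q v e = 0 ∧ QuadraticMap.polar Q v f = 0}))
    (E T Pp Pm : CliffordAlgebra Q)
    (hE : E = ι Q e) (hT : T = ι Q f)
    (hPp : Pp = (2 : K)⁻¹ • (1 + T * E)) (hPm : Pm = (2 : K)⁻¹ • (1 - T * E))
    (a0p a1p a0m a1m b0p b1p b0m b1m : CliffordAlgebra Q)
    (ha0p : a0p ∈ S) (ha1p : a1p ∈ S) (ha0m : a0m ∈ S) (ha1m : a1m ∈ S)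
    (hb0p : b0p ∈ S) (hb1p : b1p ∈ S) (hb0m : b0m ∈ S) (hb1m : b1m ∈ S)
    (a b : CliffordAlgebra Q)
    (ha : a = Pp * a0p + Pp * E * a1p + Pm * a0m + Pm * E * a1m)
    (hb : b = Pp * b0p + Pp * E * b1p + Pm * b0m + Pm * E * b1m) :
    a * b =
      Pp * (a0p * b0p + involute a1p * b1m) +
      Pp * E * (a1p * b0m + involute a0p * b1p) +
      Pm * (a0m * b0m + involute a1m * b1p) +
      Pm * E * (a1m * b0p + involute a0m * b1m) := by
  -- involute preserves S
  have hInv : ∀ s ∈ S, involute (Q := Q) s ∈ S := by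
    rw [hS]; intro s hs
    induction hs using Algebra.adjoin_induction with
    | mem x hx =>
      obtain ⟨v, hv, rfl⟩ := hx
      rw [involute_ι]
      exact neg_mem (Algebra.subset_adjoin ⟨v, hv, rfl⟩)
    | algebraMap r => simpa using Subalgebra.algebraMap_mem _ r
    | add x y hx hy ihx ihy => simpa [map_add] using add_mem ihx ihy
    | mul x y hx hy ihx ihy => simpa [map_mul] using mul_mem ihx ihy
  -- commutation of E with S
  have hcommE : ∀ s ∈ S, E * s = involute s * E := by
    rw [hS, hE]; intro s hs
    induction hs using Algebra.adjoin_induction with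
    | mem x hx =>
      obtain ⟨v, ⟨hv1, hv2⟩, rfl⟩ := hx
      rw [involute_ι, neg_mul, ι_mul_ι_comm, QuadraticMap.polar_comm, hv1,
        map_zero, zero_sub]
    | algebraMap r => simp [Algebra.commutes]
    | add x y hx hy ihx ihy => rw [mul_add, ihx, ihy, map_add, add_mul]
    | mul x y hx hy ihx ihy =>
      rw [← mul_assoc, ihx, mul_assoc, ihy, ← mul_assoc, ← map_mul]
  have hcommT : ∀ s ∈ S, T * s = involute s * T := by
    rw [hS, hT]; intro s hs
    induction hs using Algebra.adjoin_induction with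
    | mem x hx =>
      obtain ⟨v, ⟨hv1, hv2⟩, rfl⟩ := hx
      rw [involute_ι, neg_mul, ι_mul_ι_comm, QuadraticMap.polar_comm, hv2,
        map_zero, zero_sub]
    | algebraMap r => simp [Algebra.commutes]
    | add x y hx hy ihx ihy => rw [mul_add, ihx, ihy, map_add, add_mul]
    | mul x y hx hy ihx ihy =>
      rw [← mul_assoc, ihx, mul_assoc, ihy, ← mul_assoc, ← map_mul]
  have hsE : ∀ s ∈ S, s * E = E * involute s := by
    intro s hs
    have h := hcommE (involute s) (hInv s hs)
    rw [involute_involute] at h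
    exact h.symm
  have hsT : ∀ s ∈ S, s * T = T * involute s := by
    intro s hs
    have h := hcommT (involute s) (hInv s hs)
    rw [involute_involute] at h
    exact h.symm
  have hsTE : ∀ s ∈ S, s * (T * E) = T * E * s := by
    intro s hs
    calc s * (T * E) = s * T * E := (mul_assoc _ _ _).symm
      _ = T * involute s * E := by rw [hsT s hs]
      _ = T * (involute s * E) := mul_assoc _ _ _
      _ = T * (E * s) := by rw [hsE _ (hInv s hs), involute_involute]
      _ = T * E * s := (mul_assoc _ _ _).symm
  have hsPp : ∀ s ∈ S, s * Pp = Pp * s := by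
    intro s hs
    rw [hPp, mul_smul_comm, smul_mul_assoc, mul_add, add_mul, mul_one, one_mul,
      hsTE s hs]
  have hsPm : ∀ s ∈ S, s * Pm = Pm * s := by
    intro s hs
    rw [hPm, mul_smul_comm, smul_mul_assoc, mul_sub, sub_mul, mul_one, one_mul,
      hsTE s hs]
  have hEE : E * E = 1 := by rw [hE, ι_sq_scalar, he, map_one]
  have hTT : T * T = -1 := by rw [hT, ι_sq_scalar, hf, map_neg, map_one]
  have hET : E * T = -(T * E) := by
    rw [hE, hT, ι_mul_ι_comm, horth, map_zero, zero_sub]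
  have hTETE : T * E * (T * E) = 1 := by
    have h1 : T * E * (T * E) = T * (E * T) * E := by noncomm_ring
    have h2 : T * -(T * E) * E = -(T * T * (E * E)) := by noncomm_ring
    rw [h1, hET, h2, hTT, hEE]
    simp
  have key2 : ∀ x : CliffordAlgebra Q, (2 : K)⁻¹ • (x + x) = x := by
    intro x
    rw [← two_smul K x, smul_smul, inv_mul_cancel₀ hK, one_smul]
  have hPpPp : Pp * Pp = Pp := by
    have h : (1 + T * E) * (1 + T * E) = (1 + T * E) + (1 + T * E) := by
      rw [mul_add, mul_one, add_mul, one_mul, hTETE]; abel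
    rw [hPp, smul_mul_assoc, mul_smul_comm, h, key2]
  have hPmPm : Pm * Pm = Pm := by
    have h : (1 - T * E) * (1 - T * E) = (1 - T * E) + (1 - T * E) := by
      rw [mul_sub, mul_one, sub_mul, one_mul, hTETE]; abel
    rw [hPm, smul_mul_assoc, mul_smul_comm, h, key2]
  have hPpPm : Pp * Pm = 0 := by
    have h : (1 + T * E) * (1 - T * E) = 0 := by
      rw [mul_sub, mul_one, add_mul, one_mul, hTETE]; abel
    rw [hPp, hPm, smul_mul_assoc, mul_smul_comm, h, smul_zero, smul_zero]
  have hPmPp : Pm * Pp = 0 := by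
    have h : (1 - T * E) * (1 + T * E) = 0 := by
      rw [mul_add, mul_one, sub_mul, one_mul, hTETE]; abel
    rw [hPm, hPp, smul_mul_assoc, mul_smul_comm, h, smul_zero, smul_zero]
  have hEPp : E * Pp = Pm * E := by
    have h1 : E * (1 + T * E) = E - T := by
      rw [mul_add, mul_one, ← mul_assoc, hET, neg_mul, mul_assoc, hEE, mul_one]
      abel
    have h2 : (1 - T * E) * E = E - T := by
      rw [sub_mul, one_mul, mul_assoc, hEE, mul_one]
    rw [hPp, hPm, mul_smul_comm, smul_mul_assoc, h1, h2]
  have hEPm : E * Pm = Pp * E := by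
    have h1 : E * (1 - T * E) = E + T := by
      rw [mul_sub, mul_one, ← mul_assoc, hET, neg_mul, mul_assoc, hEE, mul_one]
      abel
    have h2 : (1 + T * E) * E = E + T := by
      rw [add_mul, one_mul, mul_assoc, hEE, mul_one]
    rw [hPm, hPp, mul_smul_comm, smul_mul_assoc, h1, h2]
  rw [ha, hb]
  simp only [add_mul, mul_add]
  rw [auxA Pp Pp Pp a0p b0p hPpPp (hsPp a0p ha0p),
    auxB Pp Pp Pp E a0p (involute a0p) b1p hPpPp (hsPp a0p ha0p) (hsE a0p ha0p),
    auxA Pp Pm 0 a0p b0m hPpPm (hsPm a0p ha0p),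
    auxB Pp Pm 0 E a0p (involute a0p) b1m hPpPm (hsPm a0p ha0p) (hsE a0p ha0p),
    auxC Pp Pp Pm 0 E a1p b0p hPpPm hEPp (hsPp a1p ha1p),
    auxD Pp Pp Pm 0 E a1p (involute a1p) b1p hPpPm hEPp (hsE a1p ha1p) hEE (hsPp a1p ha1p),
    auxC Pp Pm Pp Pp E a1p b0m hPpPp hEPm (hsPm a1p ha1p),
    auxD Pp Pm Pp Pp E a1p (involute a1p) b1m hPpPp hEPm (hsE a1p ha1p) hEE (hsPm a1p ha1p),
    auxA Pm Pp 0 a0m b0p hPmPp (hsPp a0m ha0m),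
    auxB Pm Pp 0 E a0m (involute a0m) b1p hPmPp (hsPp a0m ha0m) (hsE a0m ha0m),
    auxA Pm Pm Pm a0m b0m hPmPm (hsPm a0m ha0m),
    auxB Pm Pm Pm E a0m (involute a0m) b1m hPmPm (hsPm a0m ha0m) (hsE a0m ha0m),
    auxC Pm Pp Pm Pm E a1m b0p hPmPm hEPp (hsPp a1m ha1m),
    auxD Pm Pp Pm Pm E a1m (involute a1m) b1p hPmPm hEPp (hsE a1m ha1m) hEE (hsPp a1m ha1m),
    auxC Pm Pm Pp 0 E a1m b0m hPmPp hEPm (hsPm a1m ha1m),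
    auxD Pm Pm Pp 0 E a1m (involute a1m) b1m hPmPp hEPm (hsE a1m ha1m) hEE (hsPm a1m ha1m)]
  simp only [zero_mul, add_zero, zero_add]
  abel
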